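/- Theorem 2 (dichotomy, case n = 1): Let β, κ, μ, η be cardinals with ω ≤ β, η strongly β-inaccessible, μ < β, κ ≤ 2^μ, and β, η regular. Let (X, r) be a set with a binary relation and |X| = η. Then either X contains a κ-directed subset of cardinality η, or X contains a family of cardinality β of pairwise disjoint subsets each of size < κ such that the union of any two distinct members is not κ-directed. -/

import Mathlib

open Cardinal

/-- `A` is `κ`-directed: every subset of `A` of cardinality `< κ` has a bound. -/
def KDirected {X : Type u} (r : X → X → Prop) (κ : Cardinal.{u}) (A : Set X) : Prop :=
  ∀ B ⊆ A, #B < κ → ∃ c, ∀ a ∈ B, r a c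

/-- `η` is strongly `β`-inaccessible (`β ≪ η`). -/
def StronglyBetaInaccessible (β η : Cardinal.{u}) : Prop :=
  β < η ∧ ∀ α < η, ∀ lam < β, α ^ lam < η

/-- Theorem 2 (case `n = 1`): either `X` has a `κ`-directed subset of cardinality `η`,
or `X` has a family of `β` many pairwise disjoint subsets, each of size `< κ`, the union
of any two distinct members of which is not `κ`-directed. -/
theorem directed_or_disjoint_family (β κ μ η : Cardinal.{u})
    (hβ : ℵ₀ ≤ β) (hβη : StronglyBetaInaccessible β η) (hμβ : μ < β)
    (hκμ : κ ≤ 2 ^ μ) (hβreg : β.IsRegular) (hηreg : η.IsRegular)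
    (X : Type u) (r : X → X → Prop) (hX : #X = η) :
    (∃ A : Set X, KDirected r κ A ∧ #A = η) ∨
    (∃ F : Set (Set X), #F = β ∧ F.Pairwise Disjoint ∧ (∀ A ∈ F, #A < κ) ∧
      ∀ A ∈ F, ∀ B ∈ F, A ≠ B → ¬ KDirected r κ (A ∪ B)) := by
  classical
  have hηinf : ℵ₀ ≤ η := hηreg.aleph0_le
  have hXpos : (0 : Cardinal) < #X := by
    rw [hX]; exact lt_of_lt_of_le aleph0_pos hηinf
  have hXne : Nonempty X := by
    rwa [← Cardinal.mk_ne_zero_iff, ← pos_iff_ne_zero]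
  have hκη : κ < η := by
    refine lt_of_le_of_lt hκμ (hβη.2 2 ?_ μ hμβ)
    exact lt_of_lt_of_le (by exact_mod_cast nat_lt_aleph0 2) hηinf
  -- the collection of families of pairwise disjoint small unbounded sets
  set S : Set (Set (Set X)) :=
    {F | (∀ B ∈ F, #B < κ ∧ ¬ ∃ c, ∀ a ∈ B, r a c) ∧ F.Pairwise Disjoint} with hS
  obtain ⟨F, hFS, hFmax⟩ := zorn_subset S (by
    intro c hcS hchain
    refine ⟨⋃₀ c, ⟨?_, ?_⟩, fun s hs => Set.subset_sUnion_of_mem hs⟩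
    · rintro B ⟨G, hGc, hBG⟩
      exact (hcS hGc).1 B hBG
    · rintro B1 ⟨G1, hG1, hB1⟩ B2 ⟨G2, hG2, hB2⟩ hne
      rcases hchain.total hG1 hG2 with h | h
      · exact (hcS hG2).2 (h hB1) hB2 hne
      · exact (hcS hG1).2 hB1 (h hB2) hne)
  rcases le_or_gt β #F with hle | hlt
  · -- extract a subfamily of size exactly β
    obtain ⟨F', hF'F, hF'card⟩ := le_mk_iff_exists_subset.mp hle
    refine Or.inr ⟨F', hF'card, hFS.2.mono hF'F, fun A hA => (hFS.1 A (hF'F hA)).1,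
      fun A hA B hB _ hdir => ?_⟩
    obtain ⟨c, hc⟩ := hdir A Set.subset_union_left (hFS.1 A (hF'F hA)).1
    exact (hFS.1 A (hF'F hA)).2 ⟨c, hc⟩
  · -- the complement of the union is a κ-directed set of size η
    set U : Set X := ⋃₀ F with hU
    have hUcard : #U < η := by
      refine lt_of_le_of_lt (mk_sUnion_le F) ?_
      refine Cardinal.mul_lt_of_lt hηinf (hlt.trans hβη.1)
        (lt_of_le_of_lt (ciSup_le' fun s => (hFS.1 s s.2).1.le) hκη)
    have hYcard : #(Uᶜ : Set X) = η := by
      refine le_antisymm ((Cardinal.mk_set_le _).trans_eq hX) ?_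
      by_contra hlt'
      push_neg at hlt'
      have := Cardinal.add_lt_of_lt hηinf hUcard hlt'
      rw [Cardinal.mk_sum_compl, hX] at this
      exact lt_irrefl _ this
    refine Or.inl ⟨Uᶜ, ?_, hYcard⟩
    intro B hB hBκ
    by_contra hnb
    have hBU : B ∈ F := by
      have : insert B F ∈ S := by
        constructor
        · rintro B' (rfl | hB')
          · exact ⟨hBκ, hnb⟩
          · exact hFS.1 B' hB'
        · refine hFS.2.insert_of_symm ?_
          intro C hC _
          refine Set.disjoint_left.mpr fun x hxB hxC => ?_
          exact (hB hxB) (Set.subset_sUnion_of_mem hC hxC)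
      exact (hFmax this (Set.subset_insert B F)) (Set.mem_insert B F)
    have hBne : B.Nonempty := by
      rcases B.eq_empty_or_nonempty with rfl | h
      · exact absurd ⟨Classical.arbitrary X, fun a ha => ha.elim⟩ hnb
      · exact h
    obtain ⟨x, hx⟩ := hBne
    exact (hB hx) (Set.subset_sUnion_of_mem hBU hx)
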